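/- Let n ≥ 1 and let x = ((u_1,v_1,b_1),…,(u_n,v_n,b_n)) and x' be two elements of ([0,1]² × {−1,1})^n that differ in at most one coordinate, such that in each of x and x' the first components u_1,…,u_n are pairwise distinct and the second components v_1,…,v_n are pairwise distinct. Let f denote the map assigning to such a configuration the number f(x) = des(π̃(x)) + des(π̃(x)^{-1}), where π̃(x) ∈ B_n is the signed permutation associated to x. Then |f(x) − f(x')| ≤ 4. -/

import Mathlib

open MeasureTheory ProbabilityTheory Filter Finset Topology

noncomputable section

/-- The index set `{-n, …, -1, 1, …, n}` on which signed permutations of rank `n` act. -/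
abbrev SIdx (n : ℕ) := {i : ℤ // i ≠ 0 ∧ |i| ≤ (n : ℤ)}

instance SIdx.fintype (n : ℕ) : Fintype (SIdx n) :=
  Fintype.ofFinset ((Finset.Icc (-(n : ℤ)) (n : ℤ)).filter fun i => i ≠ 0)
    (by intro i; show _ ↔ i ≠ 0 ∧ |i| ≤ (n : ℤ); simp only [Finset.mem_filter, Finset.mem_Icc, abs_le]; omega)

instance (n : ℕ) : Neg (SIdx n) :=
  ⟨fun i => ⟨-i.1, by
    obtain ⟨h1, h2⟩ := i.2; exact ⟨neg_ne_zero.mpr h1, by simpa [abs_neg] using h2⟩⟩⟩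

@[simp] lemma SIdx.neg_val {n : ℕ} (i : SIdx n) : (-i).1 = -i.1 := rfl

/-- A permutation of `{-n, …, -1, 1, …, n}` is a signed permutation iff it is antisymmetric,
i.e. `π(-i) = -π(i)` for all `i`. -/
def IsSignedPerm (n : ℕ) (π : Equiv.Perm (SIdx n)) : Prop := ∀ i, π (-i) = -(π i)

instance (n : ℕ) : DecidablePred (IsSignedPerm n) :=
  fun π => inferInstanceAs (Decidable (∀ i, π (-i) = -(π i)))

/-- The hyperoctahedral group `B_n`, i.e. the group of signed permutations of rank `n`. -/
abbrev BGroup (n : ℕ) := {π : Equiv.Perm (SIdx n) // IsSignedPerm n π}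

instance (n : ℕ) : Nonempty (BGroup n) := ⟨⟨1, fun _ => rfl⟩⟩

/-- The value `π(j)` of a signed permutation in one-line notation (set to `0` outside the
domain; in particular `valAt n π 0 = 0`, matching the type-`B` convention `π(0) = 0`). -/
def valAt (n : ℕ) (π : Equiv.Perm (SIdx n)) (j : ℤ) : ℤ :=
  if h : j ≠ 0 ∧ |j| ≤ (n : ℤ) then (π ⟨j, h⟩).1 else 0

/-- The descent number of a signed permutation (type-`B` convention `π(0) = 0`):
`des(π) = #{0 ≤ i ≤ n-1 : π(i) > π(i+1)}`. -/
def desB (n : ℕ) (π : Equiv.Perm (SIdx n)) : ℕ :=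
  ((Finset.range n).filter fun i : ℕ => valAt n π ((i : ℤ) + 1) < valAt n π ((i : ℤ))).card

/-- Expectation of a statistic with respect to the uniform distribution on a finite set. -/
def expec {α : Type*} [Fintype α] (f : α → ℝ) : ℝ := (∑ x, f x) / (Fintype.card α)

/-- Variance of a statistic with respect to the uniform distribution on a finite set. -/
def varU {α : Type*} [Fintype α] (f : α → ℝ) : ℝ := expec fun x => (f x - expec f) ^ 2

/-- The law of a real-valued statistic under the uniform distribution, as a probability
measure on `ℝ`. -/
def unifLaw {α : Type*} [Fintype α] [Nonempty α] (f : α → ℝ) : ProbabilityMeasure ℝ :=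
  ⟨((PMF.uniformOfFintype α).map f).toMeasure, inferInstance⟩

/-- The standard normal distribution `N(0,1)` as a probability measure on `ℝ`. -/
def stdGaussianPM : ProbabilityMeasure ℝ := ⟨gaussianReal 0 1, inferInstance⟩

/-- The x-rank of the `i`-th point of a configuration: the position of `uᵢ` when the first
coordinates are sorted in ascending order. -/
def xrank {n : ℕ} (x : Fin n → ℝ × ℝ × Bool) (i : Fin n) : ℕ :=
  (Finset.univ.filter fun j : Fin n => (x j).1 ≤ (x i).1).card

/-- The y-rank of the `i`-th point of a configuration: the position of `vᵢ` when the second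
coordinates are sorted in ascending order. -/
def yrank {n : ℕ} (x : Fin n → ℝ × ℝ × Bool) (i : Fin n) : ℕ :=
  (Finset.univ.filter fun j : Fin n => (x j).2.1 ≤ (x i).2.1).card

/-- The sign of the `i`-th point (`true` codes `+1`). -/
def bsgn {n : ℕ} (x : Fin n → ℝ × ℝ × Bool) (i : Fin n) : ℤ :=
  if (x i).2.2 then 1 else -1

/-- The configuration lies in `([0,1]² × {±1})ⁿ`. -/
def InRange {n : ℕ} (x : Fin n → ℝ × ℝ × Bool) : Prop :=
  ∀ i, (x i).1 ∈ Set.Icc (0 : ℝ) 1 ∧ (x i).2.1 ∈ Set.Icc (0 : ℝ) 1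

/-- The first coordinates of the configuration are pairwise distinct, and so are the
second coordinates. -/
def DistinctCoords {n : ℕ} (x : Fin n → ℝ × ℝ × Bool) : Prop :=
  (∀ i j, i ≠ j → (x i).1 ≠ (x j).1) ∧ ∀ i j, i ≠ j → (x i).2.1 ≠ (x j).2.1

/-- `P` is the signed permutation associated to the configuration `x`: it is antisymmetric,
and for every point the value of `P` at the point's x-rank is its sign times its y-rank. -/
def AssocSigned {n : ℕ} (x : Fin n → ℝ × ℝ × Bool) (P : Equiv.Perm (SIdx n)) : Prop :=
  IsSignedPerm n P ∧ ∀ i : Fin n, valAt n P (xrank x i) = bsgn x i * (yrank x i)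

/-- The statistic `f = des(π̃) + des(π̃⁻¹)`. -/
def fstat (n : ℕ) (P : Equiv.Perm (SIdx n)) : ℤ := (desB n P : ℤ) + (desB n P⁻¹ : ℤ)


/-!
Removing the point `i₀` in which `x` and `x'` differ deletes one entry from the one-line notation
of each of `π̃(x)` and `π̃(x')`, namely the entry at the x-rank of `i₀`. The two shortened
sequences list the remaining points in the same x-order, with the same signs and with y-ranks in
the same relative order, so they have the same descents. Deleting one entry of a sequence changes
its number of descents by at most one, hence `|des π̃(x) - des π̃(x')| ≤ 1`. Exchanging the two
coordinates of every point replaces `π̃` by `π̃⁻¹`, which gives the same bound for the inverses.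
-/

open Finset Function

section Descents

variable {α : Type*}

def eraseAt (p : ℕ) (a : ℕ → α) : ℕ → α := fun i => if i < p then a i else a (i + 1)

variable [LinearOrder α]

def desSeq (m : ℕ) (a : ℕ → α) : ℕ := #{i ∈ range m | a (i + 1) < a i}

lemma desSeq_congr {m : ℕ} {a b : ℕ → α} (h : ∀ i < m, (a (i + 1) < a i ↔ b (i + 1) < b i)) :
    desSeq m a = desSeq m b :=
  congrArg card <| filter_congr fun i hi => h i (mem_range.1 hi)

lemma desSeq_add (k l : ℕ) (a : ℕ → α) :
    desSeq (k + l) a = desSeq k a + desSeq l (fun i => a (k + i)) := by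
  simp only [desSeq, card_filter, sum_range_add, add_assoc]

lemma desSeq_one (a : ℕ → α) : desSeq 1 a = if a 1 < a 0 then 1 else 0 := by
  rw [desSeq, range_one, filter_singleton]
  split_ifs <;> rfl

lemma desSeq_eraseAt_le_and_le_add_one (a : ℕ → α) {m p : ℕ} (hp : 1 ≤ p) (hpm : p ≤ m + 1) :
    desSeq m (eraseAt p a) ≤ desSeq (m + 1) a ∧ desSeq (m + 1) a ≤ desSeq m (eraseAt p a) + 1 := by
  obtain ⟨q, rfl⟩ : ∃ q, p = q + 1 := ⟨p - 1, by omega⟩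
  obtain ⟨r, rfl⟩ : ∃ r, m = q + r := ⟨m - q, by omega⟩
  have head : desSeq q (eraseAt (q + 1) a) = desSeq q a :=
    desSeq_congr fun i hi => by
      simp only [eraseAt, if_pos (show i < q + 1 by omega), if_pos (show i + 1 < q + 1 by omega)]
  rcases r with _ | s
  · rw [add_zero, desSeq_add q 1, head, desSeq_one]
    split_ifs <;> omega
  · have tail : (fun i => eraseAt (q + 1) a (q + 1 + i)) = fun i => a (q + 2 + i) := by
      funext i
      simp only [eraseAt, if_neg (show ¬ q + 1 + i < q + 1 by omega)]
      ring_nf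
    rw [show q + (s + 1) + 1 = q + 2 + s by omega, show q + (s + 1) = q + 1 + s by omega,
      desSeq_add (q + 2), desSeq_add q 2, desSeq_add (q + 1), desSeq_add q 1, head, tail,
      show (2 : ℕ) = 1 + 1 from rfl, desSeq_add 1 1, desSeq_one, desSeq_one, desSeq_one]
    simp only [eraseAt, add_zero, lt_irrefl, if_false, lt_add_iff_pos_right, if_true, zero_lt_one]
    split_ifs <;> first | omega | (exfalso; order)

end Descents

section Rank

variable {ι β : Type*} [LinearOrder β] {s : Finset ι} {f : ι → β} {i j : ι}

def rankIn (s : Finset ι) (f : ι → β) (j : ι) : ℕ := #{k ∈ s | f k ≤ f j}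

lemma rankIn_le_rankIn (h : f i ≤ f j) : rankIn s f i ≤ rankIn s f j :=
  card_le_card <| monotone_filter_right s fun _ _ hk => hk.trans h

lemma rankIn_lt_rankIn (hj : j ∈ s) (h : f i < f j) : rankIn s f i < rankIn s f j :=
  card_lt_card <| (ssubset_iff_of_subset <| monotone_filter_right s fun _ _ hk => hk.trans h.le).2
    ⟨j, mem_filter.2 ⟨hj, le_rfl⟩, fun hj' => (mem_filter.1 hj').2.not_gt h⟩

lemma rankIn_lt_rankIn_iff (hj : j ∈ s) : rankIn s f i < rankIn s f j ↔ f i < f j :=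
  ⟨fun h => lt_of_not_ge fun hle => h.not_ge (rankIn_le_rankIn hle), rankIn_lt_rankIn hj⟩

lemma rankIn_pos (hj : j ∈ s) : 0 < rankIn s f j :=
  card_pos.2 ⟨j, mem_filter.2 ⟨hj, le_rfl⟩⟩

lemma rankIn_le_card : rankIn s f j ≤ #s :=
  card_filter_le _ _

lemma surjOn_rankIn (hf : Set.InjOn f s) : Set.SurjOn (rankIn s f) s (Icc 1 #s) := by
  refine surjOn_of_injOn_of_card_le _ (fun j hj => mem_Icc.2 ⟨rankIn_pos hj, rankIn_le_card⟩)
    (fun i hi j hj hij => hf hi hj ?_) (by simp)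
  by_contra hne
  rcases lt_or_gt_of_ne hne with h | h
  · exact (rankIn_lt_rankIn hj h).ne hij
  · exact (rankIn_lt_rankIn hi h).ne' hij

variable [DecidableEq ι] {i₀ : ι}

lemma rankIn_eq_rankIn_erase_add (hi₀ : i₀ ∈ s) :
    rankIn s f j = rankIn (s.erase i₀) f j + if f i₀ ≤ f j then 1 else 0 := by
  rw [rankIn, rankIn, filter_erase]
  split_ifs with h
  · exact (card_erase_add_one (mem_filter.2 ⟨hi₀, h⟩)).symm
  · rw [erase_eq_of_notMem (a := i₀) fun h' => h (mem_filter.1 h').2, add_zero]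

lemma eraseAt_rankIn_erase {γ : Type*} (g : ℕ → γ) (hf : Set.InjOn f s) (hi₀ : i₀ ∈ s)
    (hj : j ∈ s) (hji : j ≠ i₀) :
    eraseAt (rankIn s f i₀) g (rankIn (s.erase i₀) f j) = g (rankIn s f j) := by
  have hsplit := rankIn_eq_rankIn_erase_add (f := f) (j := j) hi₀
  simp only [eraseAt]
  rcases lt_or_gt_of_ne (hf.ne hj hi₀ hji) with h | h
  · have := rankIn_lt_rankIn hi₀ h
    rw [if_neg h.not_ge] at hsplit
    rw [if_pos (by omega), hsplit, add_zero]
  · have := rankIn_lt_rankIn hj h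
    rw [if_pos h.le] at hsplit
    rw [if_neg (by omega), hsplit]

end Rank

section SignedPerm

variable {n : ℕ} {P : Equiv.Perm (SIdx n)}

lemma IsSignedPerm.inv (hP : IsSignedPerm n P) : IsSignedPerm n P⁻¹ := by
  intro i
  rw [Equiv.Perm.inv_eq_iff_eq, hP, Equiv.Perm.coe_inv, Equiv.apply_symm_apply]

lemma IsSignedPerm.valAt_neg (hP : IsSignedPerm n P) (a : ℤ) : valAt n P (-a) = -valAt n P a := by
  by_cases ha : a ≠ 0 ∧ |a| ≤ n
  · have ha' : -a ≠ 0 ∧ |-a| ≤ n := by rwa [neg_ne_zero, abs_neg]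
    rw [valAt, valAt, dif_pos ha, dif_pos ha', ← SIdx.neg_val, ← hP]
    rfl
  · have ha' : ¬ (-a ≠ 0 ∧ |-a| ≤ n) := by rwa [neg_ne_zero, abs_neg]
    rw [valAt, valAt, dif_neg ha, dif_neg ha', neg_zero]

lemma valAt_inv_of_valAt_eq {a b : ℤ} (ha : a ≠ 0 ∧ |a| ≤ n) (h : valAt n P a = b) :
    valAt n P⁻¹ b = a := by
  rw [valAt, dif_pos ha] at h
  subst h
  rw [valAt, dif_pos (P ⟨a, ha⟩).2]
  simp

lemma natCast_mem_sIdx {r : ℕ} (h0 : 0 < r) (hr : r ≤ n) : (r : ℤ) ≠ 0 ∧ |(r : ℤ)| ≤ n := by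
  rw [Int.abs_natCast]
  omega

lemma desB_eq_desSeq : desB n P = desSeq n fun k : ℕ => valAt n P k := by
  simp only [desB, desSeq, Nat.cast_add, Nat.cast_one]

end SignedPerm

lemma sign_mul_lt_sign_mul_iff {s t y z y' z' : ℤ} (hs : s = 1 ∨ s = -1) (ht : t = 1 ∨ t = -1)
    (hy : 0 < y) (hz : 0 < z) (hy' : 0 < y') (hz' : 0 < z')
    (hyz : y < z ↔ y' < z') (hzy : z < y ↔ z' < y') : s * y < t * z ↔ s * y' < t * z' := by
  rcases hs with rfl | rfl <;> rcases ht with rfl | rfl <;> omega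

section Configuration

variable {n : ℕ} {x x' : Fin n → ℝ × ℝ × Bool} {P P' : Equiv.Perm (SIdx n)}

def swapCoords (x : Fin n → ℝ × ℝ × Bool) : Fin n → ℝ × ℝ × Bool :=
  fun i => ((x i).2.1, (x i).1, (x i).2.2)

lemma DistinctCoords.injective_fst (hd : DistinctCoords x) : Injective fun i => (x i).1 :=
  fun i j h => not_imp_not.1 (hd.1 i j) h

lemma DistinctCoords.injective_snd (hd : DistinctCoords x) : Injective fun i => (x i).2.1 :=
  fun i j h => not_imp_not.1 (hd.2 i j) h

lemma xrank_pos (i : Fin n) : 0 < xrank x i := rankIn_pos (mem_univ i)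

lemma yrank_pos (i : Fin n) : 0 < yrank x i := rankIn_pos (mem_univ i)

lemma xrank_le (i : Fin n) : xrank x i ≤ n := rankIn_le_card.trans_eq (card_fin n)

lemma yrank_lt_yrank_iff {i j : Fin n} : yrank x i < yrank x j ↔ (x i).2.1 < (x j).2.1 :=
  rankIn_lt_rankIn_iff (mem_univ j)

lemma bsgn_eq_one_or_neg_one (i : Fin n) : bsgn x i = 1 ∨ bsgn x i = -1 := by
  unfold bsgn
  split_ifs <;> simp

lemma AssocSigned.inv (hP : AssocSigned x P) : AssocSigned (swapCoords x) P⁻¹ := by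
  refine ⟨hP.1.inv, fun i => ?_⟩
  change valAt n P⁻¹ (yrank x i) = bsgn x i * xrank x i
  have hr := natCast_mem_sIdx (xrank_pos (x := x) i) (xrank_le i)
  rcases bsgn_eq_one_or_neg_one (x := x) i with hb | hb
  · rw [hb, one_mul]
    exact valAt_inv_of_valAt_eq hr (by rw [hP.2 i, hb, one_mul])
  · rw [hb, neg_one_mul]
    refine valAt_inv_of_valAt_eq (by rwa [neg_ne_zero, abs_neg]) ?_
    rw [hP.1.valAt_neg, hP.2 i, hb, neg_one_mul, neg_neg]

lemma AssocSigned.eraseAt_valAt (hP : AssocSigned x P) (hu : Injective fun i => (x i).1)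
    {i₀ j : Fin n} (hj : j ≠ i₀) :
    eraseAt (xrank x i₀) (fun k : ℕ => valAt n P k) (rankIn (univ.erase i₀) (fun i => (x i).1) j)
      = bsgn x j * yrank x j :=
  (eraseAt_rankIn_erase _ hu.injOn (mem_univ i₀) (mem_univ j) hj).trans (hP.2 j)

theorem desB_le_desB_add_one (hu : Injective fun i => (x i).1)
    (hu' : Injective fun i => (x' i).1) {i₀ : Fin n} (hdiff : ∀ j, j ≠ i₀ → x j = x' j)
    (hP : AssocSigned x P) (hP' : AssocSigned x' P') :
    desB n P ≤ desB n P' + 1 := by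
  obtain ⟨m, rfl⟩ : ∃ m, n = m + 1 := ⟨n - 1, by have := i₀.pos; omega⟩
  set A := eraseAt (xrank x i₀) fun k : ℕ => valAt (m + 1) P k
  set A' := eraseAt (xrank x' i₀) fun k : ℕ => valAt (m + 1) P' k
  have hA0 : A 0 = 0 := by simp [A, eraseAt, xrank_pos, valAt]
  have hA0' : A' 0 = 0 := by simp [A', eraseAt, xrank_pos, valAt]
  have point : ∀ k, 0 < k → k ≤ m →
      ∃ j ≠ i₀, A k = bsgn x j * yrank x j ∧ A' k = bsgn x j * yrank x' j := by
    intro k hk hkm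
    obtain ⟨j, hj, rfl⟩ := surjOn_rankIn (s := univ.erase i₀) hu.injOn
      (mem_Icc.2 ⟨hk, by simpa using hkm⟩)
    have hji := ne_of_mem_erase hj
    have hρ : rankIn (univ.erase i₀) (fun i => (x i).1) j
        = rankIn (univ.erase i₀) (fun i => (x' i).1) j :=
      congrArg card <| filter_congr fun k hk => by
        simp only [hdiff k (ne_of_mem_erase hk), hdiff j hji]
    refine ⟨j, hji, hP.eraseAt_valAt hu hji, ?_⟩
    rw [hρ, show bsgn x j = bsgn x' j by rw [bsgn, bsgn, hdiff j hji]]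
    exact hP'.eraseAt_valAt hu' hji
  have hyrank : ∀ j l, j ≠ i₀ → l ≠ i₀ → (yrank x j < yrank x l ↔ yrank x' j < yrank x' l) := by
    intro j l hj hl
    rw [yrank_lt_yrank_iff, yrank_lt_yrank_iff, hdiff j hj, hdiff l hl]
  have same : desSeq m A = desSeq m A' := desSeq_congr fun i hi => by
    rcases Nat.eq_zero_or_pos i with rfl | hi0
    · obtain ⟨j, -, h, h'⟩ := point 1 one_pos (by omega)
      have := yrank_pos (x := x) j
      have := yrank_pos (x := x') j
      rw [zero_add, hA0, hA0', h, h']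
      rcases bsgn_eq_one_or_neg_one (x := x) j with hb | hb <;> rw [hb] <;> omega
    · obtain ⟨j, hj, h, h'⟩ := point (i + 1) (by omega) (by omega)
      obtain ⟨l, hl, g, g'⟩ := point i hi0 hi.le
      rw [h, h', g, g']
      exact sign_mul_lt_sign_mul_iff (bsgn_eq_one_or_neg_one j) (bsgn_eq_one_or_neg_one l)
        (mod_cast yrank_pos j) (mod_cast yrank_pos l) (mod_cast yrank_pos j) (mod_cast yrank_pos l)
        (mod_cast hyrank j l hj hl) (mod_cast hyrank l j hl hj)
  have hle : desSeq (m + 1) (fun k : ℕ => valAt (m + 1) P k) ≤ desSeq m A + 1 :=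
    (desSeq_eraseAt_le_and_le_add_one _ (xrank_pos i₀) (xrank_le i₀)).2
  have hle' : desSeq m A' ≤ desSeq (m + 1) (fun k : ℕ => valAt (m + 1) P' k) :=
    (desSeq_eraseAt_le_and_le_add_one _ (xrank_pos i₀) (xrank_le i₀)).1
  rw [desB_eq_desSeq, desB_eq_desSeq]
  omega

theorem abs_desB_sub_desB_le_one (hu : Injective fun i => (x i).1)
    (hu' : Injective fun i => (x' i).1) {i₀ : Fin n} (hdiff : ∀ j, j ≠ i₀ → x j = x' j)
    (hP : AssocSigned x P) (hP' : AssocSigned x' P') :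
    |(desB n P : ℤ) - desB n P'| ≤ 1 := by
  have h := desB_le_desB_add_one hu hu' hdiff hP hP'
  have h' := desB_le_desB_add_one hu' hu (fun j hj => (hdiff j hj).symm) hP' hP
  rw [abs_le]
  omega

end Configuration

theorem stmt13_general (n : ℕ) (x x' : Fin n → ℝ × ℝ × Bool)
    (hd : DistinctCoords x) (hd' : DistinctCoords x')
    (hdiff : ∃ i₀ : Fin n, ∀ j : Fin n, j ≠ i₀ → x j = x' j)
    (P P' : Equiv.Perm (SIdx n))
    (hP : AssocSigned x P) (hP' : AssocSigned x' P') :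
    |fstat n P - fstat n P'| ≤ 4 := by
  obtain ⟨i₀, hdiff⟩ := hdiff
  have hdes := abs_desB_sub_desB_le_one hd.injective_fst hd'.injective_fst hdiff hP hP'
  have hdesInv := abs_desB_sub_desB_le_one (x := swapCoords x) (x' := swapCoords x') (i₀ := i₀)
    hd.injective_snd hd'.injective_snd (fun j hj => by simp only [swapCoords, hdiff j hj])
    hP.inv hP'.inv
  rw [abs_le] at hdes hdesInv ⊢
  rw [fstat, fstat]
  omega

/-- If two configurations in `([0,1]² × {±1})ⁿ` with pairwise distinct
first and second coordinates differ in at most one coordinate, then the values of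
`f = des(π̃(·)) + des(π̃(·)⁻¹)` on their associated signed permutations differ by at most `4`. -/
theorem stmt13 (n : ℕ) (hn : 1 ≤ n) (x x' : Fin n → ℝ × ℝ × Bool)
    (hx : InRange x) (hx' : InRange x')
    (hd : DistinctCoords x) (hd' : DistinctCoords x')
    (hdiff : ∃ i₀ : Fin n, ∀ j : Fin n, j ≠ i₀ → x j = x' j)
    (P P' : Equiv.Perm (SIdx n))
    (hP : AssocSigned x P) (hP' : AssocSigned x' P') :
    |fstat n P - fstat n P'| ≤ 4 :=
  stmt13_general n x x' hd hd' hdiff P P' hP hP'
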